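/- Let k be a perfect field of characteristic p > 0, (H, ω) a finite-dimensional symplectic k-vector space, I ⊆ H an isotropic subspace, and φ a symplectic zip on H compatible with I, with induced Frobenius-semilinear map φ' on H' = I^⊥/I. Then the image of φ' is a Lagrangian subspace of (H', ω'); in particular φ' is a symplectic zip on (H', ω'). -/

import Mathlib

/-!
Write `P = I^⊥` and `H' = P/I`. For a Lagrangian `L ⊆ H`, the image of `L ∩ P` in `H'` is
Lagrangian: its orthogonal is the image of `(L ∩ P)^⊥ ∩ P = (L + I) ∩ P`, i.e. of `L ∩ P` again.
Both the kernel and the image of `φ'` are of this form. For the image, `φ x ∈ P` forces `x ∈ P`,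
so `φ(P) = φ(H) ∩ P`. For the kernel, `φ(H) ∩ I = 0`, because `I ⊆ P^⊥` and `φ(H) = φ(H)^⊥` while
`P + φ(H) = H`; hence `φ x ∈ I` already means `φ x = 0`.
-/

/-- The orthogonal complement `F^⊥ = {x ∈ H : ω x y = 0 for all y ∈ F}`. -/
def perp {k H : Type*} [Field k] [AddCommGroup H] [Module k H]
    (ω : H →ₗ[k] H →ₗ[k] k) (F : Submodule k H) : Submodule k H where
  carrier := {x | ∀ y ∈ F, ω x y = 0}
  add_mem' := by
    intro a b ha hb y hy
    simp only [map_add, LinearMap.add_apply, ha y hy, hb y hy, add_zero]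
  zero_mem' := by
    intro y hy
    simp
  smul_mem' := by
    intro c x hx y hy
    simp only [map_smul, LinearMap.smul_apply, hx y hy, smul_zero]

/-- A subspace is Lagrangian if it equals its own orthogonal complement. -/
def IsLagrangian {k H : Type*} [Field k] [AddCommGroup H] [Module k H]
    (ω : H →ₗ[k] H →ₗ[k] k) (F : Submodule k H) : Prop :=
  perp ω F = F

/-- Over a perfect field the Frobenius is surjective, so ranges of Frobenius-semilinear
maps are submodules. -/
instance frobeniusSurjective (k : Type*) [Field k] (p : ℕ) [Fact p.Prime] [CharP k p]
    [PerfectRing k p] : RingHomSurjective (frobenius k p) :=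
  ⟨surjective_frobenius k p⟩

section Perp

variable {k H : Type*} [Field k] [AddCommGroup H] [Module k H] {ω : H →ₗ[k] H →ₗ[k] k}

theorem perp_antitone : Antitone (perp ω) :=
  fun _ _ h _ hx y hy => hx y (h hy)

theorem perp_sup (F G : Submodule k H) : perp ω (F ⊔ G) = perp ω F ⊓ perp ω G := by
  refine le_antisymm (le_inf (perp_antitone le_sup_left) (perp_antitone le_sup_right)) ?_
  rintro x ⟨hxF, hxG⟩ _ hy
  obtain ⟨a, ha, b, hb, rfl⟩ := Submodule.mem_sup.mp hy
  rw [map_add, hxF a ha, hxG b hb, add_zero]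

theorem perp_top_eq_bot (hs : ω.SeparatingLeft) : perp ω ⊤ = ⊥ :=
  eq_bot_iff.mpr fun x hx => (Submodule.mem_bot k).mpr (hs x fun y => hx y trivial)

theorem le_perp_perp (hω : ω.IsRefl) (F : Submodule k H) : F ≤ perp ω (perp ω F) :=
  fun x hx _ hy => hω _ _ (hy x hx)

theorem perp_eq_orthogonal (hω : ω.IsRefl) (F : Submodule k H) :
    perp ω F = LinearMap.BilinForm.orthogonal ω F := by
  ext x
  exact ⟨fun h y hy => hω _ _ (h y hy), fun h y hy => hω _ _ (h y hy)⟩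

theorem perp_perp [FiniteDimensional k H] (hω : ω.IsRefl) (hs : ω.SeparatingLeft)
    (F : Submodule k H) : perp ω (perp ω F) = F := by
  rw [perp_eq_orthogonal hω, perp_eq_orthogonal hω]
  exact LinearMap.BilinForm.orthogonal_orthogonal (hω.nondegenerate_iff_separatingLeft.mpr hs) hω F

theorem perp_inf [FiniteDimensional k H] (hω : ω.IsRefl) (hs : ω.SeparatingLeft)
    (F G : Submodule k H) : perp ω (F ⊓ G) = perp ω F ⊔ perp ω G := by
  conv_lhs => rw [← perp_perp hω hs F, ← perp_perp hω hs G, ← perp_sup, perp_perp hω hs]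

theorem disjoint_of_perp_sup_eq_top (hω : ω.IsRefl) (hs : ω.SeparatingLeft)
    {I R : Submodule k H} (hR : R ≤ perp ω R) (hsup : perp ω I ⊔ R = ⊤) : Disjoint I R := by
  rw [disjoint_iff, eq_bot_iff, ← perp_top_eq_bot hs, ← hsup, perp_sup]
  exact inf_le_inf (le_perp_perp hω I) hR

end Perp

section Reduction

variable {k H : Type*} [Field k] [AddCommGroup H] [Module k H] {ω : H →ₗ[k] H →ₗ[k] k}

abbrev ReducedSpace (ω : H →ₗ[k] H →ₗ[k] k) (I : Submodule k H) : Type _ :=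
  perp ω I ⧸ I.comap (perp ω I).subtype

def reduction (ω : H →ₗ[k] H →ₗ[k] k) (I L : Submodule k H) : Submodule k (ReducedSpace ω I) :=
  (L.comap (perp ω I).subtype).map (I.comap (perp ω I).subtype).mkQ

variable {I L : Submodule k H}

theorem mk_mem_reduction_iff (hiso : I ≤ perp ω I) (y : perp ω I) :
    (Submodule.Quotient.mk y : ReducedSpace ω I) ∈ reduction ω I L ↔ (y : H) ∈ L ⊔ I := by
  simp only [reduction, Submodule.mem_map, Submodule.mem_comap, Submodule.mkQ_apply,
    Submodule.Quotient.eq, Submodule.subtype_apply, AddSubgroupClass.coe_sub]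
  constructor
  · rintro ⟨x, hxL, hxy⟩
    simpa using Submodule.sub_mem_sup hxL hxy
  · intro hy
    obtain ⟨l, hl, i, hi, hli⟩ := Submodule.mem_sup.mp hy
    have hl' : l = y - i := eq_sub_of_add_eq hli
    have hlP : l ∈ perp ω I := hl' ▸ Submodule.sub_mem _ y.2 (hiso hi)
    refine ⟨⟨l, hlP⟩, hl, ?_⟩
    show l - y ∈ I
    rw [hl', sub_sub_cancel_left]
    exact I.neg_mem hi

theorem mk_mem_perp_reduction_iff
    (ω' : ReducedSpace ω I →ₗ[k] ReducedSpace ω I →ₗ[k] k)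
    (hω' : ∀ x y : perp ω I,
        ω' (Submodule.Quotient.mk x) (Submodule.Quotient.mk y) = ω (x : H) (y : H))
    (y : perp ω I) :
    (Submodule.Quotient.mk y : ReducedSpace ω I) ∈ perp ω' (reduction ω I L) ↔
      (y : H) ∈ perp ω (L ⊓ perp ω I) := by
  constructor
  · rintro h x ⟨hxL, hxP⟩
    have hx := h (Submodule.Quotient.mk ⟨x, hxP⟩) ⟨⟨x, hxP⟩, hxL, rfl⟩
    rwa [hω'] at hx
  · rintro h _ ⟨x, hxL, rfl⟩
    rw [Submodule.mkQ_apply, hω']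
    exact h x ⟨hxL, x.2⟩

theorem IsLagrangian.reduction [FiniteDimensional k H] (hω : ω.IsRefl) (hs : ω.SeparatingLeft)
    (hiso : I ≤ perp ω I) (ω' : ReducedSpace ω I →ₗ[k] ReducedSpace ω I →ₗ[k] k)
    (hω' : ∀ x y : perp ω I,
        ω' (Submodule.Quotient.mk x) (Submodule.Quotient.mk y) = ω (x : H) (y : H))
    (hL : IsLagrangian ω L) : IsLagrangian ω' (reduction ω I L) := by
  ext z
  induction z using Submodule.Quotient.induction_on with
  | H y =>
    rw [mk_mem_perp_reduction_iff ω' hω', mk_mem_reduction_iff hiso, perp_inf hω hs, hL,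
      perp_perp hω hs]

end Reduction

section InducedMap

variable {k H : Type*} [Field k] [AddCommGroup H] [Module k H] {σ : k →+* k}
  {ω : H →ₗ[k] H →ₗ[k] k} {I : Submodule k H} {φ : H →ₛₗ[σ] H}

def inducedMap (ω : H →ₗ[k] H →ₗ[k] k) (I : Submodule k H) (φ : H →ₛₗ[σ] H)
    (hφP : ∀ x ∈ perp ω I, φ x ∈ perp ω I) (hφI : ∀ x ∈ I, φ x ∈ I) :
    ReducedSpace ω I →ₛₗ[σ] ReducedSpace ω I :=
  -- the ascription keeps the stored proof of type `_ ≤ _`, so that `Submodule.ker_mapQ` rewrites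
  Submodule.mapQ _ _ (φ.restrict hφP) (show _ ≤ _ from fun x hx => hφI x hx)

theorem inducedMap_mk (hφP : ∀ x ∈ perp ω I, φ x ∈ perp ω I) (hφI : ∀ x ∈ I, φ x ∈ I)
    (x : perp ω I) :
    inducedMap ω I φ hφP hφI (Submodule.Quotient.mk x) =
      Submodule.Quotient.mk ⟨φ x, hφP x x.2⟩ :=
  rfl

theorem range_inducedMap [RingHomSurjective σ] (hφP : ∀ x ∈ perp ω I, φ x ∈ perp ω I)
    (hφI : ∀ x ∈ I, φ x ∈ I) (hφinj : ∀ x, φ x ∈ perp ω I → x ∈ perp ω I) :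
    LinearMap.range (inducedMap ω I φ hφP hφI) = reduction ω I (LinearMap.range φ) := by
  rw [inducedMap, Submodule.range_mapQ, LinearMap.range_restrict, reduction]
  congr 1
  ext y
  simp only [Submodule.mem_comap, Submodule.mem_map, LinearMap.mem_range,
    Submodule.subtype_apply]
  exact ⟨fun ⟨x, _, hx⟩ => ⟨x, hx⟩, fun ⟨x, hx⟩ => ⟨x, hφinj x (hx ▸ y.2), hx⟩⟩

theorem ker_inducedMap [RingHomSurjective σ] (hφP : ∀ x ∈ perp ω I, φ x ∈ perp ω I)
    (hφI : ∀ x ∈ I, φ x ∈ I) (hdisj : Disjoint I (LinearMap.range φ)) :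
    LinearMap.ker (inducedMap ω I φ hφP hφI) = reduction ω I (LinearMap.ker φ) := by
  rw [inducedMap, Submodule.ker_mapQ, reduction]
  congr 1
  ext x
  simp only [Submodule.mem_comap, LinearMap.restrict_apply, Submodule.subtype_apply,
    LinearMap.mem_ker]
  exact ⟨fun hx => (Submodule.disjoint_def.mp hdisj) _ hx (LinearMap.mem_range_self φ x),
    fun hx => hx ▸ I.zero_mem⟩

end InducedMap

theorem zip_induced_image_lagrangian
    {k : Type*} [Field k] (p : ℕ) [Fact p.Prime] [CharP k p] [PerfectRing k p]
    {H : Type*} [AddCommGroup H] [Module k H] [FiniteDimensional k H]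
    (ω : H →ₗ[k] H →ₗ[k] k)
    (halt : ∀ x, ω x x = 0)
    (hnd : ∀ x, (∀ y, ω x y = 0) → x = 0)
    (I : Submodule k H) (hiso : I ≤ perp ω I)
    (φ : H →ₛₗ[frobenius k p] H)
    (hker : IsLagrangian ω (LinearMap.ker φ))
    (hrange : IsLagrangian ω (LinearMap.range φ))
    -- compatibility with `I`:
    (hφI : ∀ x ∈ I, φ x = 0)
    (hφP : ∀ x ∈ perp ω I, φ x ∈ perp ω I)
    (hφinj : ∀ x : H, φ x ∈ perp ω I → x ∈ perp ω I)
    (hφsurj : ∀ y : H, ∃ x : H, y - φ x ∈ perp ω I)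
    -- the induced form `ω'` on `H' = I^⊥ / I`:
    (ω' : (perp ω I ⧸ I.comap (perp ω I).subtype) →ₗ[k]
        (perp ω I ⧸ I.comap (perp ω I).subtype) →ₗ[k] k)
    (hω' : ∀ x y : perp ω I,
        ω' (Submodule.Quotient.mk x) (Submodule.Quotient.mk y) = ω (x : H) (y : H))
    -- the induced map `φ'` on `H' = I^⊥ / I`:
    (φ' : (perp ω I ⧸ I.comap (perp ω I).subtype) →
        (perp ω I ⧸ I.comap (perp ω I).subtype))
    (hφ' : ∀ (x : perp ω I) (hx : φ (x : H) ∈ perp ω I),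
        φ' (Submodule.Quotient.mk x) =
          Submodule.Quotient.mk (⟨φ (x : H), hx⟩ : perp ω I)) :
    -- the image of `φ'` is a Lagrangian subspace of `(H', ω')` …
    (∃ R' : Submodule k (perp ω I ⧸ I.comap (perp ω I).subtype),
        (R' : Set (perp ω I ⧸ I.comap (perp ω I).subtype)) = Set.range φ' ∧
        IsLagrangian ω' R') ∧
    -- … and in particular `φ'` is a symplectic zip on `(H', ω')`:
    (∀ z w, φ' (z + w) = φ' z + φ' w) ∧
    (∀ (a : k) z, φ' (a • z) = a ^ p • φ' z) ∧
    (∃ K' : Submodule k (perp ω I ⧸ I.comap (perp ω I).subtype),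
        (K' : Set (perp ω I ⧸ I.comap (perp ω I).subtype)) = {z | φ' z = 0} ∧
        IsLagrangian ω' K') := by
  have hω : ω.IsRefl := LinearMap.IsAlt.isRefl halt
  have hdisj : Disjoint I (LinearMap.range φ) := by
    refine disjoint_of_perp_sup_eq_top hω hnd hrange.ge (eq_top_iff.mpr fun y _ => ?_)
    obtain ⟨x, hx⟩ := hφsurj y
    simpa using Submodule.add_mem_sup hx (LinearMap.mem_range_self φ x)
  have hφI' : ∀ x ∈ I, φ x ∈ I := fun x hx => (hφI x hx).symm ▸ I.zero_mem
  obtain rfl : φ' = inducedMap ω I φ hφP hφI' :=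
    funext fun z => Submodule.Quotient.induction_on _ z fun x =>
      (hφ' x (hφP x x.2)).trans (inducedMap_mk hφP hφI' x).symm
  refine ⟨⟨_, LinearMap.coe_range _, ?_⟩, map_add _, fun a z => ?_, ⟨LinearMap.ker _, rfl, ?_⟩⟩
  · rw [range_inducedMap hφP hφI' hφinj]
    exact hrange.reduction hω hnd hiso ω' hω'
  · rw [map_smulₛₗ, frobenius_def]
  · rw [ker_inducedMap hφP hφI' hdisj]
    exact hker.reduction hω hnd hiso ω' hω'
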